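/- arXiv:1312.0209 — 3 statements merged into one kernel-verified Lean document; each statement's English description precedes it below -/
import Mathlib

section
/- Let G = (A ⊎ B, E) be a bipartite graph with |A| = n, |B| = m. Fix integers k ≤ n, l ≤ m. Define the (k,l)-rigidity matrix R of G as the |E| × (l·n + k·m) matrix with rows indexed by edges ab' and columns in blocks of size l per vertex of A and size k per vertex of B, where the row of edge ab' has generic entries (θ_{i'b'} : 1 ≤ i ≤ l) in the block of a, generic entries (θ_{ja} : 1 ≤ j ≤ k) in the block of b', and zeros elsewhere. Then the rank of the (k,l)-rigidity matrix of the complete bipartite graph K_{n,m} equals l·n + k·m - k·l. -/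
/-- The `(k,l)`-rigidity matrix of a bipartite graph with parts `Fin n` and `Fin m`
and edge set `E`: rows are indexed by edges, columns come in blocks of size `l` for
each vertex of `A = Fin n` and blocks of size `k` for each vertex of `B = Fin m`.
The row of an edge `ab'` has entries `θA i b'` (`1 ≤ i ≤ l`) in the block of `a`,
entries `θB j a` (`1 ≤ j ≤ k`) in the block of `b'`, and zeros elsewhere. -/
def rigidityMatrix (n m k l : ℕ) (E : Finset (Fin n × Fin m))
    (θA : Fin l → Fin m → ℝ) (θB : Fin k → Fin n → ℝ) :
    Matrix {e : Fin n × Fin m // e ∈ E} ((Fin n × Fin l) ⊕ (Fin m × Fin k)) ℝ :=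
  fun e c =>
    match c with
    | Sum.inl (a, i) => if a = e.1.1 then θA i e.1.2 else 0
    | Sum.inr (b, j) => if b = e.1.2 then θB j e.1.1 else 0

lemma aux_sum_ite {l : ℕ} (N : ℕ) (x : Fin l → ℝ) :
    ∑ i : Fin l, (if N = (i:ℕ) then (1:ℝ) else 0) * x i
      = if h : N < l then x ⟨N, h⟩ else 0 := by
  split_ifs with h
  · rw [Finset.sum_eq_single ⟨N, h⟩]
    · simp
    · intro i _ hi
      have : N ≠ (i:ℕ) := fun hc => hi (by simp [Fin.ext_iff, hc.symm])
      simp [this]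
    · simp
  · apply Finset.sum_eq_zero
    intro i _
    have : N ≠ (i:ℕ) := by omega
    simp [this]

lemma aux_mulVec (n m k l : ℕ)
    (v : (Fin n × Fin l) ⊕ (Fin m × Fin k) → ℝ)
    (e : {e : Fin n × Fin m // e ∈ (Finset.univ : Finset (Fin n × Fin m))}) :
    (rigidityMatrix n m k l Finset.univ
        (fun i b => if (b:ℕ) = (i:ℕ) then 1 else 0)
        (fun j a => if (a:ℕ) = (j:ℕ) then 1 else 0)).mulVec v e
      = (if hb : (e.1.2 : ℕ) < l then v (Sum.inl (e.1.1, ⟨e.1.2, hb⟩)) else 0)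
        + (if ha : (e.1.1 : ℕ) < k then v (Sum.inr (e.1.2, ⟨e.1.1, ha⟩)) else 0) := by
  rw [Matrix.mulVec, dotProduct]
  rw [Fintype.sum_sum_type]
  have h1 : ∑ c : Fin n × Fin l,
      (rigidityMatrix n m k l Finset.univ
        (fun i b => if (b:ℕ) = (i:ℕ) then 1 else 0)
        (fun j a => if (a:ℕ) = (j:ℕ) then 1 else 0)) e (Sum.inl c) * v (Sum.inl c)
      = if hb : (e.1.2 : ℕ) < l then v (Sum.inl (e.1.1, ⟨e.1.2, hb⟩)) else 0 := by
    rw [Fintype.sum_prod_type]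
    rw [Finset.sum_eq_single e.1.1]
    · simpa [rigidityMatrix] using aux_sum_ite (l := l) (e.1.2 : ℕ)
        (fun i => v (Sum.inl (e.1.1, i)))
    · intro a _ ha
      apply Finset.sum_eq_zero
      intro i _
      simp [rigidityMatrix, ha]
    · simp
  have h2 : ∑ c : Fin m × Fin k,
      (rigidityMatrix n m k l Finset.univ
        (fun i b => if (b:ℕ) = (i:ℕ) then 1 else 0)
        (fun j a => if (a:ℕ) = (j:ℕ) then 1 else 0)) e (Sum.inr c) * v (Sum.inr c)
      = if ha : (e.1.1 : ℕ) < k then v (Sum.inr (e.1.2, ⟨e.1.1, ha⟩)) else 0 := by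
    rw [Fintype.sum_prod_type]
    rw [Finset.sum_eq_single e.1.2]
    · simpa [rigidityMatrix] using aux_sum_ite (l := k) (e.1.1 : ℕ)
        (fun j => v (Sum.inr (e.1.2, j)))
    · intro b _ hb
      apply Finset.sum_eq_zero
      intro j _
      simp [rigidityMatrix, hb]
    · simp
  rw [h1, h2]

/-- For generic `θ`, the rank of the `(k,l)`-rigidity matrix of the complete
bipartite graph `K_{n,m}` equals `l·n + k·m - k·l` (for `k ≤ n`, `l ≤ m`).
Genericity is expressed by the existence of parameters realizing the (maximal,
hence generic) rank. -/
theorem rank_rigidityMatrix_completeBipartite (n m k l : ℕ) (hk : k ≤ n) (hl : l ≤ m) :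
    ∃ (θA : Fin l → Fin m → ℝ) (θB : Fin k → Fin n → ℝ),
      (rigidityMatrix n m k l Finset.univ θA θB).rank = l * n + k * m - k * l := by
  refine ⟨fun i b => if (b:ℕ) = (i:ℕ) then 1 else 0,
         fun j a => if (a:ℕ) = (j:ℕ) then 1 else 0, ?_⟩
  set M := rigidityMatrix n m k l Finset.univ
      (fun i b => if (b:ℕ) = (i:ℕ) then 1 else 0)
      (fun j a => if (a:ℕ) = (j:ℕ) then 1 else 0) with hM
  -- characterize kernel membership
  have hker : ∀ v, v ∈ LinearMap.ker M.mulVecLin ↔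
      ∀ (a : Fin n) (b : Fin m),
        (if hb : (b : ℕ) < l then v (Sum.inl (a, ⟨b, hb⟩)) else 0)
        + (if ha : (a : ℕ) < k then v (Sum.inr (b, ⟨a, ha⟩)) else 0) = 0 := by
    intro v
    rw [LinearMap.mem_ker]
    constructor
    · intro h a b
      have := congrFun h ⟨(a, b), Finset.mem_univ _⟩
      rwa [Matrix.mulVecLin_apply, aux_mulVec] at this
    · intro h
      funext e
      rw [Matrix.mulVecLin_apply, aux_mulVec]
      exact h e.1.1 e.1.2
  -- the kernel is equivalent to (Fin k × Fin l → ℝ)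
  have hkerdim : Module.finrank ℝ (LinearMap.ker M.mulVecLin) = k * l := by
    have heq : (Fin k × Fin l → ℝ) ≃ₗ[ℝ] LinearMap.ker M.mulVecLin := by
      refine LinearEquiv.ofBijective ?_ ?_
      · refine LinearMap.codRestrict _ ?_ ?_
        · exact
          { toFun := fun c x =>
              match x with
              | Sum.inl (a, q) => if h : (a:ℕ) < k then c (⟨a, h⟩, q) else 0
              | Sum.inr (b, p) => if h : (b:ℕ) < l then -c (p, ⟨b, h⟩) else 0
            map_add' := by
              intro c d
              funext x
              rcases x with ⟨a, q⟩ | ⟨b, p⟩ <;> simp only [Pi.add_apply] <;> split <;> ring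
            map_smul' := by
              intro r c
              funext x
              rcases x with ⟨a, q⟩ | ⟨b, p⟩ <;>
                simp only [Pi.smul_apply, smul_eq_mul, RingHom.id_apply] <;> split <;> ring }
        · intro c
          rw [hker]
          intro a b
          by_cases ha : (a:ℕ) < k <;> by_cases hb : (b:ℕ) < l <;>
            simp [ha, hb]
      · constructor
        · intro c d hcd
          ext ⟨p, q⟩
          have := congrFun (Subtype.ext_iff.mp hcd) (Sum.inl (Fin.castLE hk p, q))
          simpa [p.2] using this
        · rintro ⟨v, hv⟩
          rw [hker] at hv
          refine ⟨fun pq => v (Sum.inl (Fin.castLE hk pq.1, pq.2)), ?_⟩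
          apply Subtype.ext
          funext x
          rcases x with ⟨a, q⟩ | ⟨b, p⟩
          · simp only [LinearMap.codRestrict_apply, LinearMap.coe_mk, AddHom.coe_mk]
            by_cases ha : (a:ℕ) < k
            · simp only [ha, dif_pos]
              congr 1
            · simp only [ha, dif_neg, not_false_iff]
              -- v (inl (a,q)) = 0 from hv a (castLE hl q)
              have := hv a (Fin.castLE hl q)
              simp [ha, Fin.ext_iff] at this
              rw [← this]
          · simp only [LinearMap.codRestrict_apply, LinearMap.coe_mk, AddHom.coe_mk]
            by_cases hb : (b:ℕ) < l
            · simp only [hb, dif_pos]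
              have := hv (Fin.castLE hk p) b
              simp [hb, p.2, Fin.ext_iff] at this
              have h2 : v (Sum.inr (b, p)) = - v (Sum.inl (Fin.castLE hk p, ⟨b, hb⟩)) := by
                have h3 : (⟨(p:ℕ), p.2⟩ : Fin k) = p := by simp
                rw [← h3] at this ⊢
                linarith [this]
              rw [h2]
            · simp only [hb, dif_neg, not_false_iff]
              have := hv (Fin.castLE hk p) b
              simp [hb, p.2, Fin.ext_iff] at this
              have h3 : (⟨(p:ℕ), p.2⟩ : Fin k) = p := by simp
              rw [← h3]
              linarith [this]
    have := heq.finrank_eq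
    simp at this
    omega
  have hrn := LinearMap.finrank_range_add_finrank_ker M.mulVecLin
  have hdom : Module.finrank ℝ (((Fin n × Fin l) ⊕ (Fin m × Fin k)) → ℝ)
      = n * l + m * k := by
    simp [Module.finrank_pi]
  rw [hkerdim, hdom] at hrn
  have hrank : M.rank = n * l + m * k - k * l := by
    rw [Matrix.rank]
    omega
  rw [hrank]
  have h1 : n * l = l * n := Nat.mul_comm _ _
  have h2 : m * k = k * m := Nat.mul_comm _ _
  omega
end

section
/- For d ≥ 4, one can add exactly 2^{d-1} - d edges to the graph of the (d-1)-cube so that the resulting bipartite graph G = (A ⊎ B, E) is (1,d)-Laman: |E| = d|A| + |B| - d, and every induced subgraph with A' ≠ ∅ and B' ≠ ∅ has at most d|A'| + |B'| - d edges. -/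
/-- A vertex of the cube `{0,1}^n` has even coordinate sum. -/
def evenVertex {n : ℕ} (v : Fin n → Bool) : Prop :=
  (Finset.univ.filter fun i => v i).card % 2 = 0

instance {n : ℕ} (v : Fin n → Bool) : Decidable (evenVertex v) :=
  inferInstanceAs (Decidable (_ = 0))

/-- The edges of the cube graph on `{0,1}^n`, directed from the even side `A` to
the odd side `B`. -/
def cubeEdges (n : ℕ) : Finset ((Fin n → Bool) × (Fin n → Bool)) :=
  Finset.univ.filter fun p =>
    evenVertex p.1 ∧ ¬ evenVertex p.2 ∧
      (Finset.univ.filter fun i => p.1 i ≠ p.2 i).card = 1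

/-!
Each even vertex `v` of the cube `{0,1}^n`, `n = d - 1`, is joined to its `n` cube neighbours, to
`v ∆ 1110…0`, and, for `v` in a set `S` of `2^(n-1) - d` even vertices, also to `v ∆ 01110…0`.
Every even vertex then has degree `d` or `d + 1`, and the `(1, d)`-Laman count holds as soon as
every nonempty `F ⊆ S` has at least `|F| + d` neighbours.

This expansion is proved on subcubes, by induction on the set `J` of free coordinates: split along
a coordinate outside the support of the two triples and use the induction hypothesis on both faces;
a set missing at most `|J| + 1` vertices of its parity class sees the whole opposite class. The
induction gives the bound for every `S` once `d ≥ 6`; for `d = 5` an explicit `S` is checked, and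
for `d = 4` the complete bipartite graph `K_{4,4}` works.
-/

namespace CubeLaman

open Finset
open scoped symmDiff

section LamanCriterion

variable {α β : Type*} [DecidableEq α] [DecidableEq β]

lemma mul_le_laman_bound {a b d : ℕ} (ha : 1 ≤ a) (hb : b ≤ d) : a * b ≤ d * a + b - d := by
  obtain ⟨a, rfl⟩ := Nat.exists_eq_add_of_le' ha
  have : a * b ≤ a * d := Nat.mul_le_mul_left a hb
  have : d * (a + 1) + b - d = d * a + b := by rw [mul_add_one]; omega
  rw [this]
  nlinarith

def edgesOf (A : Finset α) (N : α → Finset β) : Finset (α × β) :=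
  A.biUnion fun v => (N v).image (Prod.mk v)

lemma mem_edgesOf {A : Finset α} {N : α → Finset β} {p : α × β} :
    p ∈ edgesOf A N ↔ p.1 ∈ A ∧ p.2 ∈ N p.1 := by
  obtain ⟨v, w⟩ := p
  simp [edgesOf]

lemma card_edgesOf (A : Finset α) (N : α → Finset β) :
    (edgesOf A N).card = ∑ v ∈ A, (N v).card := by
  rw [edgesOf, card_biUnion]
  · exact sum_congr rfl fun v _ => card_image_of_injective _ (Prod.mk_right_injective v)
  · intro v _ w _ hvw
    simp only [Function.onFun, disjoint_left, mem_image]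
    rintro _ ⟨x, -, rfl⟩ ⟨y, -, hy⟩
    exact hvw (congrArg Prod.fst hy).symm

/-- Only the vertices of `A'` with all `d + 1` neighbours in `B'` contribute more than `d` edges;
if there are any, their neighbourhood makes `B'` large enough to pay for them. -/
theorem card_edges_le_of_expansion {d : ℕ} (E : Finset (α × β)) (N : α → Finset β)
    (hE : ∀ p ∈ E, p.2 ∈ N p.1) (hdeg : ∀ v, (N v).card ≤ d + 1)
    (hexp : ∀ F : Finset α, F.Nonempty → (∀ v ∈ F, (N v).card = d + 1) →
      F.card + d ≤ (F.biUnion N).card)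
    {A' : Finset α} (B' : Finset β) (hA' : A'.Nonempty) :
    (E.filter fun p => p.1 ∈ A' ∧ p.2 ∈ B').card ≤ d * A'.card + B'.card - d := by
  set F := A'.filter fun v => N v ⊆ B' ∧ (N v).card = d + 1
  have hsum : (E.filter fun p => p.1 ∈ A' ∧ p.2 ∈ B').card ≤
      ∑ v ∈ A', (B'.filter (· ∈ N v)).card := by
    refine (card_le_card (t := edgesOf A' fun v => B'.filter (· ∈ N v)) fun p hp => ?_).trans
      (card_edgesOf A' _).le
    simp only [mem_filter] at hp
    exact mem_edgesOf.2 ⟨hp.2.1, mem_filter.2 ⟨hp.2.2, hE p hp.1⟩⟩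
  have hterm : ∀ v ∈ A', (B'.filter (· ∈ N v)).card ≤ d + if v ∈ F then 1 else 0 := by
    intro v hv
    have hsub : B'.filter (· ∈ N v) ⊆ N v := fun w hw => (mem_filter.1 hw).2
    split_ifs with hvF
    · exact (card_le_card hsub).trans (hdeg v)
    · by_contra! hlt
      have := hdeg v
      have heq := eq_of_subset_of_card_le hsub (by omega)
      refine hvF (mem_filter.2 ⟨hv, fun w hw => ?_, by have := card_le_card hsub; omega⟩)
      exact (mem_filter.1 (heq ▸ hw)).1
  have hle : (E.filter fun p => p.1 ∈ A' ∧ p.2 ∈ B').card ≤ d * A'.card + F.card := by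
    refine hsum.trans ((sum_le_sum hterm).trans_eq ?_)
    rw [sum_add_distrib, sum_const, smul_eq_mul, mul_comm, sum_boole, Nat.cast_id,
      filter_mem_eq_inter, inter_eq_right.2 (filter_subset _ _)]
  rcases F.eq_empty_or_nonempty with hF | hF
  · have hprod : (E.filter fun p => p.1 ∈ A' ∧ p.2 ∈ B').card ≤ A'.card * B'.card := by
      rw [← card_product]
      exact card_le_card fun p hp => mem_product.2 (mem_filter.1 hp).2
    rw [hF, card_empty] at hle
    rcases le_or_gt d B'.card with hd | hd
    · omega
    · exact hprod.trans (mul_le_laman_bound (card_pos.2 hA') hd.le)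
  · have hcover : F.biUnion N ⊆ B' := biUnion_subset.2 fun v hv => (mem_filter.1 hv).2.1
    have := (hexp F hF fun v hv => (mem_filter.1 hv).2.2).trans (card_le_card hcover)
    omega

end LamanCriterion

section Parity

variable {n : ℕ}

def parity (v : Fin n → Bool) : ZMod 2 := ∑ i, if v i then 1 else 0

lemma parity_symmDiff (v w : Fin n → Bool) : parity (v ∆ w) = parity v + parity w := by
  simp only [parity, ← sum_add_distrib, Pi.symmDiff_apply, Bool.symmDiff_eq_xor]
  refine sum_congr rfl fun i _ => ?_
  cases v i <;> cases w i <;> decide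

lemma parity_eq_card (v : Fin n → Bool) :
    parity v = ((univ.filter fun i => v i).card : ZMod 2) := by
  rw [parity, natCast_card_filter]

lemma evenVertex_iff_parity_eq_zero {v : Fin n → Bool} : evenVertex v ↔ parity v = 0 := by
  rw [evenVertex, parity_eq_card, ZMod.natCast_eq_zero_iff_even, Nat.even_iff]

lemma not_evenVertex_iff_parity_eq_one {v : Fin n → Bool} : ¬ evenVertex v ↔ parity v = 1 := by
  rw [evenVertex_iff_parity_eq_zero]
  generalize parity v = x
  revert x
  decide

def unitVec (j : Fin n) : Fin n → Bool := fun i => decide (i = j)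

lemma unitVec_injective : Function.Injective (unitVec (n := n)) := fun i j h => by
  simpa [unitVec] using congrFun h i

@[simp]
lemma parity_unitVec (j : Fin n) : parity (unitVec j) = 1 := by
  simp [parity, unitVec]

lemma symmDiff_unitVec_apply (v : Fin n → Bool) (j i : Fin n) :
    (v ∆ unitVec j) i = if i = j then !v i else v i := by
  by_cases h : i = j <;> simp [unitVec, h]

lemma eq_symmDiff_unitVec_iff {v w : Fin n → Bool} {j : Fin n} :
    w = v ∆ unitVec j ↔ (univ.filter fun i => v i ≠ w i) = {j} := by
  simp only [funext_iff, Finset.ext_iff, mem_filter, mem_univ, true_and, mem_singleton,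
    symmDiff_unitVec_apply]
  refine forall_congr' fun i => ?_
  by_cases h : i = j <;> cases v i <;> cases w i <;> simp [h]

lemma mem_cubeEdges {v w : Fin n → Bool} :
    (v, w) ∈ cubeEdges n ↔ evenVertex v ∧ ∃ j, w = v ∆ unitVec j := by
  simp only [cubeEdges, mem_filter, mem_univ, true_and, card_eq_one, eq_symmDiff_unitVec_iff]
  refine ⟨fun h => ⟨h.1, h.2.2⟩, fun ⟨hv, j, hj⟩ => ⟨hv, ?_, j, hj⟩⟩
  rw [← eq_symmDiff_unitVec_iff] at hj
  rw [hj, not_evenVertex_iff_parity_eq_one, parity_symmDiff, parity_unitVec,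
    (evenVertex_iff_parity_eq_zero.1 hv), zero_add]

end Parity

section Buckets

variable {n : ℕ} {J : Finset (Fin n)} {v w : Fin n → Bool}

def subcube (J : Finset (Fin n)) : Finset (Fin n → Bool) :=
  Fintype.piFinset fun i => if i ∈ J then univ else {false}

lemma mem_subcube : v ∈ subcube J ↔ ∀ i ∉ J, v i = false := by
  simp only [subcube, Fintype.mem_piFinset]
  refine forall_congr' fun i => ?_
  split_ifs with h <;> simp [h]

lemma card_subcube (J : Finset (Fin n)) : (subcube J).card = 2 ^ J.card := by
  simp [subcube, Fintype.card_piFinset, apply_ite card, prod_ite_mem]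

def bucket (J : Finset (Fin n)) (b : ZMod 2) : Finset (Fin n → Bool) :=
  (subcube J).filter (parity · = b)

lemma mem_bucket {b : ZMod 2} : v ∈ bucket J b ↔ (∀ i ∉ J, v i = false) ∧ parity v = b := by
  rw [bucket, mem_filter, mem_subcube]

lemma mem_bucket_univ {b : ZMod 2} : v ∈ bucket univ b ↔ parity v = b := by
  simp [mem_bucket]

lemma symmDiff_mem_bucket {b c : ZMod 2} (hv : v ∈ bucket J b) (hw : w ∈ bucket J c) :
    v ∆ w ∈ bucket J (b + c) := by
  rw [mem_bucket] at *
  refine ⟨fun i hi => ?_, by rw [parity_symmDiff, hv.2, hw.2]⟩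
  simp [hv.1 i hi, hw.1 i hi]

lemma unitVec_mem_bucket {j : Fin n} (hj : j ∈ J) : unitVec j ∈ bucket J 1 :=
  mem_bucket.2 ⟨fun i hi => by simp [unitVec, ne_of_mem_of_not_mem hj hi |>.symm], parity_unitVec j⟩

lemma card_bucket {j : Fin n} (hj : j ∈ J) (b : ZMod 2) :
    (bucket J b).card = 2 ^ (J.card - 1) := by
  have hflip : ∀ c, (bucket J c).card ≤ (bucket J (c + 1)).card := fun c => by
    rw [← card_image_of_injective _ (symmDiff_left_injective (unitVec j))]
    exact card_le_card fun x hx => by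
      obtain ⟨y, hy, rfl⟩ := mem_image.1 hx
      exact symmDiff_mem_bucket hy (unitVec_mem_bucket hj)
  have hsplit : (bucket J b).card + (bucket J (b + 1)).card = 2 ^ J.card := by
    rw [← card_subcube J, ← card_filter_add_card_filter_not (s := subcube J) (parity · = b)]
    congr 2
    refine filter_congr fun x _ => ?_
    generalize parity x = y
    revert y b
    decide
  have hback := hflip (b + 1)
  rw [add_assoc, CharTwo.add_self_eq_zero, add_zero] at hback
  rw [← mul_pow_sub_one (card_pos.2 ⟨j, hj⟩).ne' 2] at hsplit
  have := hflip b
  omega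

end Buckets

section Generators

variable {n : ℕ} {J K : Finset (Fin n)}

def triple₀ : Fin n → Bool := fun i => decide ((i : ℕ) < 3)

def triple₁ : Fin n → Bool := fun i => decide (1 ≤ (i : ℕ) ∧ (i : ℕ) < 4)

def core : Finset (Fin n) := univ.filter fun i => (i : ℕ) < 4

def gens (J : Finset (Fin n)) : Finset (Fin n → Bool) :=
  insert triple₀ (insert triple₁ (J.image unitVec))

lemma card_core_le : (core : Finset (Fin n)).card ≤ 4 := by
  rw [core, Fin.card_filter_val_lt]
  exact min_le_right n 4

lemma parity_triple₀ (hn : 4 ≤ n) : parity (triple₀ : Fin n → Bool) = 1 := by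
  rw [parity_eq_card]
  simp only [triple₀, decide_eq_true_eq, Fin.card_filter_val_lt, min_eq_right (by omega : 3 ≤ n)]
  decide

lemma parity_triple₁ (hn : 4 ≤ n) : parity (triple₁ : Fin n → Bool) = 1 := by
  have : (univ.filter fun i : Fin n => triple₁ i) =
      (univ.filter fun i : Fin n => (i : ℕ) < 4) \ univ.filter fun i : Fin n => (i : ℕ) < 1 := by
    ext i
    simp [triple₁]
    omega
  rw [parity_eq_card, this, card_sdiff_of_subset (monotone_filter_right _ fun i h => by omega),
    Fin.card_filter_val_lt, Fin.card_filter_val_lt, min_eq_right hn, min_eq_right (by omega)]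
  decide

lemma ne_unitVec_of_apply {v : Fin n → Bool} {a b : Fin n} (hab : a ≠ b) (ha : v a) (hb : v b)
    (j : Fin n) : v ≠ unitVec j := by
  rintro rfl
  simp only [unitVec, decide_eq_true_eq] at ha hb
  exact hab (ha.trans hb.symm)

lemma triple₀_ne_unitVec (hn : 4 ≤ n) (j : Fin n) : triple₀ ≠ unitVec j :=
  ne_unitVec_of_apply (a := ⟨0, by omega⟩) (b := ⟨1, by omega⟩) (by simp) (by simp [triple₀])
    (by simp [triple₀]) j

lemma triple₁_ne_unitVec (hn : 4 ≤ n) (j : Fin n) : triple₁ ≠ unitVec j :=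
  ne_unitVec_of_apply (a := ⟨1, by omega⟩) (b := ⟨2, by omega⟩) (by simp) (by simp [triple₁])
    (by simp [triple₁]) j

lemma card_gens (hn : 4 ≤ n) (J : Finset (Fin n)) : (gens J).card = J.card + 2 := by
  have h₀ : triple₀ ∉ insert triple₁ (J.image unitVec) := by
    simp only [mem_insert, mem_image, not_or, not_exists, not_and]
    refine ⟨fun h => ?_, fun j _ => (triple₀_ne_unitVec hn j).symm⟩
    simpa [triple₀, triple₁] using congrFun h ⟨0, by omega⟩
  have h₁ : triple₁ ∉ J.image unitVec := by
    simp only [mem_image, not_exists, not_and]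
    exact fun j _ => (triple₁_ne_unitVec hn j).symm
  rw [gens, card_insert_of_notMem h₀, card_insert_of_notMem h₁,
    card_image_of_injective _ unitVec_injective]

lemma gens_subset_subcube (hcore : core ⊆ J) : gens J ⊆ subcube J := by
  have hcore' : ∀ i ∉ J, 4 ≤ (i : ℕ) := fun i hi => by
    by_contra h
    exact hi (hcore (by simpa [core] using h))
  intro u hu
  simp only [gens, mem_insert, mem_image] at hu
  rw [mem_subcube]
  intro i hi
  have := hcore' i hi
  rcases hu with rfl | rfl | ⟨j, hj, rfl⟩
  · simp [triple₀]; omega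
  · simp [triple₁]; omega
  · simp [unitVec, ne_of_mem_of_not_mem hj hi |>.symm]

lemma gens_subset_bucket (hn : 4 ≤ n) (hcore : core ⊆ J) : gens J ⊆ bucket J 1 := by
  intro u hu
  refine mem_filter.2 ⟨gens_subset_subcube hcore hu, ?_⟩
  simp only [gens, mem_insert, mem_image] at hu
  rcases hu with rfl | rfl | ⟨j, -, rfl⟩
  exacts [parity_triple₀ hn, parity_triple₁ hn, parity_unitVec j]

lemma gens_mono (h : J ⊆ K) : gens J ⊆ gens K :=
  insert_subset_insert _ (insert_subset_insert _ (image_subset_image h))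

lemma triple₁_mem_gens (J : Finset (Fin n)) : triple₁ ∈ gens J :=
  mem_insert_of_mem (mem_insert_self _ _)

lemma unitVec_mem_gens {j : Fin n} (hj : j ∈ J) : unitVec j ∈ gens J :=
  mem_insert_of_mem (mem_insert_of_mem (mem_image_of_mem _ hj))

end Generators

section Expansion

variable {n : ℕ} {J : Finset (Fin n)} {T : Finset (Fin n → Bool)} {b : ZMod 2}

def nbhd (J : Finset (Fin n)) (T : Finset (Fin n → Bool)) : Finset (Fin n → Bool) :=
  image₂ (· ∆ ·) T (gens J)

/-- `2 ^ (|J| - 1)` is the size of the parity class of the subcube on `J` containing `nbhd J T`. -/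
def HasExpansion (J : Finset (Fin n)) (k : ℕ) : Prop :=
  ∀ b T, T ⊆ bucket J b → T.Nonempty → min (T.card + k) (2 ^ (J.card - 1)) ≤ (nbhd J T).card

lemma HasExpansion.mono {k l : ℕ} (h : HasExpansion J k) (hlk : l ≤ k) : HasExpansion J l :=
  fun b T hT hne => le_trans (min_le_min_right _ (by omega)) (h b T hT hne)

lemma card_gens_le_card_nbhd (hne : T.Nonempty) : (gens J).card ≤ (nbhd J T).card :=
  card_le_card_image₂_left _ hne.choose_spec (symmDiff_right_injective _)

lemma nbhd_subset_bucket (hn : 4 ≤ n) (hcore : core ⊆ J) (hT : T ⊆ bucket J b) :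
    nbhd J T ⊆ bucket J (b + 1) := by
  intro x hx
  obtain ⟨v, hv, u, hu, rfl⟩ := mem_image₂.1 hx
  exact symmDiff_mem_bucket (hT hv) (gens_subset_bucket hn hcore hu)

lemma zero_mem_of_core_subset (hn : 4 ≤ n) (hcore : core ⊆ J) : (⟨0, by omega⟩ : Fin n) ∈ J :=
  hcore (by simp [core])

/-- A vertex `w` outside `nbhd J T` has its `|J| + 2` neighbours `w ∆ u` all outside `T`. -/
lemma card_nbhd_eq_of_lt (hn : 4 ≤ n) (hcore : core ⊆ J) (hT : T ⊆ bucket J b)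
    (hlarge : 2 ^ (J.card - 1) < T.card + J.card + 2) : (nbhd J T).card = 2 ^ (J.card - 1) := by
  have h0 := zero_mem_of_core_subset hn hcore
  refine le_antisymm ((card_le_card (nbhd_subset_bucket hn hcore hT)).trans_eq
    (card_bucket h0 _)) ?_
  rw [← card_bucket h0 (b + 1)]
  refine card_le_card fun w hw => ?_
  by_contra hw'
  have hdisj : Disjoint ((gens J).image (w ∆ ·)) T := by
    refine disjoint_left.2 fun x hx hxT => hw' ?_
    obtain ⟨u, hu, rfl⟩ := mem_image.1 hx
    exact mem_image₂.2 ⟨_, hxT, u, hu, symmDiff_symmDiff_cancel_right u w⟩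
  have hsub : (gens J).image (w ∆ ·) ∪ T ⊆ bucket J b := by
    refine union_subset (fun x hx => ?_) hT
    obtain ⟨u, hu, rfl⟩ := mem_image.1 hx
    have := symmDiff_mem_bucket hw (gens_subset_bucket hn hcore hu)
    rwa [add_assoc, CharTwo.add_self_eq_zero, add_zero] at this
  have := card_le_card hsub
  rw [card_union_of_disjoint hdisj, card_image_of_injective _ (symmDiff_right_injective w),
    card_gens hn, card_bucket h0] at this
  omega

lemma hasExpansion_of_card_eq_four (hn : 4 ≤ n) (hcore : core ⊆ J) (hJ : J.card = 4) :
    HasExpansion J J.card := by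
  intro b T hT hne
  by_cases hsmall : T.card ≤ 2
  · have := card_gens_le_card_nbhd (J := J) hne
    rw [card_gens hn] at this
    omega
  · rw [card_nbhd_eq_of_lt hn hcore hT (by rw [hJ]; norm_num; omega)]
    exact min_le_right _ _

end Expansion

section Faces

variable {n : ℕ} {J : Finset (Fin n)} {T : Finset (Fin n → Bool)} {b : ZMod 2} {j : Fin n}

def lowerFace (j : Fin n) (T : Finset (Fin n → Bool)) : Finset (Fin n → Bool) :=
  T.filter fun v => v j = false

def upperFace (j : Fin n) (T : Finset (Fin n → Bool)) : Finset (Fin n → Bool) :=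
  (T.filter fun v => v j = true).image (· ∆ unitVec j)

lemma mem_bucket_of_mem_bucket_insert {v : Fin n → Bool} (hv : v ∈ bucket (insert j J) b)
    (hvj : v j = false) : v ∈ bucket J b := by
  rw [mem_bucket] at *
  refine ⟨fun i hi => ?_, hv.2⟩
  by_cases hij : i = j
  · exact hij ▸ hvj
  · exact hv.1 i (by simp [hij, hi])

lemma lowerFace_subset_bucket (hT : T ⊆ bucket (insert j J) b) : lowerFace j T ⊆ bucket J b :=
  fun _ hv => mem_bucket_of_mem_bucket_insert (hT (mem_filter.1 hv).1) (mem_filter.1 hv).2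

lemma upperFace_subset_bucket (hT : T ⊆ bucket (insert j J) b) :
    upperFace j T ⊆ bucket J (b + 1) := by
  intro x hx
  obtain ⟨v, hv, rfl⟩ := mem_image.1 hx
  rw [mem_filter] at hv
  refine mem_bucket_of_mem_bucket_insert
    (symmDiff_mem_bucket (hT hv.1) (unitVec_mem_bucket (mem_insert_self j J))) ?_
  simp [unitVec, hv.2]

lemma card_lowerFace_add_card_upperFace (j : Fin n) (T : Finset (Fin n → Bool)) :
    (lowerFace j T).card + (upperFace j T).card = T.card := by
  rw [upperFace, card_image_of_injective _ (symmDiff_left_injective _), add_comm,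
    ← card_filter_add_card_filter_not (s := T) (fun v => v j = true), lowerFace]
  simp only [Bool.not_eq_true]

/-- The neighbourhood of `T` splits into its two faces along `j`: in each, the neighbourhood of the
corresponding face of `T` in the subcube on `J`, together with the other face of `T` across the
`j`-edges. -/
lemma card_add_card_le_card_nbhd_insert (hcore : core ⊆ J) (hj : j ∉ J) :
    (nbhd J (lowerFace j T) ∪ upperFace j T).card + (nbhd J (upperFace j T) ∪ lowerFace j T).card
      ≤ (nbhd (insert j J) T).card := by
  set X := nbhd (insert j J) T
  have hgens : ∀ u ∈ gens J, u ∈ gens (insert j J) ∧ u j = false := fun u hu =>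
    ⟨gens_mono (subset_insert j J) hu, mem_subcube.1 (gens_subset_subcube hcore hu) j hj⟩
  have hflip : ∀ v ∈ T, v ∆ unitVec j ∈ X :=
    fun v hv => mem_image₂_of_mem hv (unitVec_mem_gens (mem_insert_self j J))
  have hlower : nbhd J (lowerFace j T) ∪ upperFace j T ⊆ X.filter fun x => x j = false := by
    intro x hx
    rcases mem_union.1 hx with hx | hx
    · obtain ⟨v, hv, u, hu, rfl⟩ := mem_image₂.1 hx
      rw [lowerFace, mem_filter] at hv
      exact mem_filter.2 ⟨mem_image₂_of_mem hv.1 (hgens u hu).1, by simp [hv.2, (hgens u hu).2]⟩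
    · obtain ⟨v, hv, rfl⟩ := mem_image.1 hx
      rw [mem_filter] at hv
      exact mem_filter.2 ⟨hflip v hv.1, by simp [unitVec, hv.2]⟩
  have hupper : (nbhd J (upperFace j T) ∪ lowerFace j T).image (· ∆ unitVec j) ⊆
      X.filter fun x => ¬ x j = false := by
    intro x hx
    obtain ⟨y, hy, rfl⟩ := mem_image.1 hx
    rcases mem_union.1 hy with hy | hy
    · obtain ⟨w, hw, u, hu, rfl⟩ := mem_image₂.1 hy
      obtain ⟨v, hv, rfl⟩ := mem_image.1 hw
      rw [mem_filter] at hv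
      rw [symmDiff_right_comm, symmDiff_symmDiff_cancel_right]
      exact mem_filter.2 ⟨mem_image₂_of_mem hv.1 (hgens u hu).1, by simp [hv.2, (hgens u hu).2]⟩
    · rw [lowerFace, mem_filter] at hy
      exact mem_filter.2 ⟨hflip y hy.1, by simp [unitVec, hy.2]⟩
  calc _ = (nbhd J (lowerFace j T) ∪ upperFace j T).card +
        ((nbhd J (upperFace j T) ∪ lowerFace j T).image (· ∆ unitVec j)).card := by
        rw [card_image_of_injective _ (symmDiff_left_injective _)]
    _ ≤ (X.filter fun x => x j = false).card + (X.filter fun x => ¬ x j = false).card :=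
        add_le_add (card_le_card hlower) (card_le_card hupper)
    _ = X.card := card_filter_add_card_filter_not _

end Faces

section Induction

variable {n : ℕ} {J : Finset (Fin n)}

lemma add_two_le_two_pow {k : ℕ} (hk : 4 ≤ k) : k + 2 ≤ 2 ^ (k - 1) := by
  induction k, hk using Nat.le_induction with
  | base => norm_num
  | succ k hk ih =>
    rw [Nat.add_sub_cancel, show k = k - 1 + 1 by omega, pow_succ]
    omega

/-- `a₀, a₁` are the sizes of the two faces of `T`, `s₀, s₁` those of the two faces of its
neighbourhood, `P` that of a parity class of a face. -/
lemma expansion_arith {k P a₀ a₁ s₀ s₁ : ℕ} (hk : 2 ≤ k) (hP : k + 2 ≤ P) (ha : 2 ≤ a₀ + a₁)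
    (h₀ : a₁ ≤ s₀ ∧ s₀ ≤ P ∧ (0 < a₀ → min (a₀ + k) P ≤ s₀) ∧ (P < a₀ + k + 2 → P ≤ s₀))
    (h₁ : a₀ ≤ s₁ ∧ s₁ ≤ P ∧ (0 < a₁ → min (a₁ + k) P ≤ s₁) ∧ (P < a₁ + k + 2 → P ≤ s₁)) :
    min (a₀ + a₁ + k + 2) (2 * P) ≤ s₀ + s₁ := by
  omega

lemma card_nbhd_union_bounds (hn : 4 ≤ n) (hcore : core ⊆ J) (hJ : HasExpansion J J.card)
    {X Y : Finset (Fin n → Bool)} {c : ZMod 2} (hX : X ⊆ bucket J c) (hY : Y ⊆ bucket J (c + 1)) :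
    Y.card ≤ (nbhd J X ∪ Y).card ∧ (nbhd J X ∪ Y).card ≤ 2 ^ (J.card - 1) ∧
      (0 < X.card → min (X.card + J.card) (2 ^ (J.card - 1)) ≤ (nbhd J X ∪ Y).card) ∧
      (2 ^ (J.card - 1) < X.card + J.card + 2 → 2 ^ (J.card - 1) ≤ (nbhd J X ∪ Y).card) := by
  have hnbhd : (nbhd J X).card ≤ (nbhd J X ∪ Y).card := card_le_card subset_union_left
  refine ⟨card_le_card subset_union_right, ?_, fun hpos => ?_, fun hlarge => ?_⟩
  · rw [← card_bucket (zero_mem_of_core_subset hn hcore) (c + 1)]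
    exact card_le_card (union_subset (nbhd_subset_bucket hn hcore hX) hY)
  · exact (hJ c X hX (card_pos.1 hpos)).trans hnbhd
  · exact (card_nbhd_eq_of_lt hn hcore hX hlarge).ge.trans hnbhd

lemma hasExpansion_insert (hn : 4 ≤ n) (hcore : core ⊆ J) (h4 : 4 ≤ J.card) {j : Fin n}
    (hj : j ∉ J) (hJ : HasExpansion J J.card) : HasExpansion (insert j J) (J.card + 2) := by
  intro b T hT hne
  have hcard : (insert j J).card - 1 = J.card - 1 + 1 := by rw [card_insert_of_notMem hj]; omega
  rw [hcard, pow_succ, mul_comm]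
  by_cases hsingle : T.card = 1
  · have := card_gens_le_card_nbhd (J := insert j J) hne
    rw [card_gens hn, card_insert_of_notMem hj] at this
    omega
  have hsplit := card_lowerFace_add_card_upperFace j T
  have h₀ := card_nbhd_union_bounds hn hcore hJ (lowerFace_subset_bucket hT)
    (upperFace_subset_bucket hT)
  have h₁ := card_nbhd_union_bounds hn hcore hJ (upperFace_subset_bucket hT)
    (by simpa [add_assoc, CharTwo.add_self_eq_zero] using lowerFace_subset_bucket hT)
  have hT2 : 2 ≤ (lowerFace j T).card + (upperFace j T).card := by
    have := card_pos.2 hne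
    omega
  rw [← hsplit]
  exact (expansion_arith (by omega) (add_two_le_two_pow h4) hT2 h₀ h₁).trans
    (card_add_card_le_card_nbhd_insert hcore hj)

theorem hasExpansion (hn : 4 ≤ n) (J : Finset (Fin n)) (hcore : core ⊆ J) (h4 : 4 ≤ J.card) :
    HasExpansion J J.card := by
  induction J using Finset.strongInduction with
  | H J ih =>
    rcases h4.eq_or_lt with h4 | h5
    · exact hasExpansion_of_card_eq_four hn hcore h4.symm
    obtain ⟨j, hjJ, hjcore⟩ := exists_mem_notMem_of_card_lt_card (card_core_le.trans_lt h5)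
    have hcore' : core ⊆ J.erase j := fun i hi => mem_erase.2 ⟨fun h => hjcore (h ▸ hi), hcore hi⟩
    have hcard := card_erase_of_mem hjJ
    have := hasExpansion_insert hn hcore' (by omega) (notMem_erase j J)
      (ih _ (erase_ssubset hjJ) hcore' (by omega))
    rw [insert_erase hjJ] at this
    exact this.mono (by omega)

theorem hasExpansion_univ (hn : 5 ≤ n) : HasExpansion (univ : Finset (Fin n)) (n + 1) := by
  set j : Fin n := ⟨n - 1, by omega⟩
  have hcore : core ⊆ univ.erase j := fun i hi => mem_erase.2 ⟨fun h => by
    simp only [core, mem_filter, h, j] at hi; omega, mem_univ i⟩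
  have hcard : (univ.erase j).card = n - 1 := by rw [card_erase_of_mem (mem_univ j), card_fin]
  have := hasExpansion_insert (by omega) hcore (by omega) (notMem_erase j univ)
    (hasExpansion (by omega) _ hcore (by omega))
  rw [insert_erase (mem_univ j), hcard] at this
  exact this.mono (by omega)

end Induction

section Construction

variable {n : ℕ}

def IsLamanCubeExtension (n : ℕ) (E : Finset ((Fin n → Bool) × (Fin n → Bool))) : Prop :=
  (∀ p ∈ E, evenVertex p.1 ∧ ¬ evenVertex p.2) ∧
  cubeEdges n ⊆ E ∧
  (E \ cubeEdges n).card = 2 ^ n - (n + 1) ∧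
  E.card = (n + 1) * 2 ^ (n - 1) + 2 ^ (n - 1) - (n + 1) ∧
  ∀ A' B' : Finset (Fin n → Bool),
    (∀ v ∈ A', evenVertex v) → (∀ v ∈ B', ¬ evenVertex v) →
    A'.Nonempty → B'.Nonempty →
    (E.filter fun p => p.1 ∈ A' ∧ p.2 ∈ B').card ≤ (n + 1) * A'.card + B'.card - (n + 1)

lemma card_bucket_univ (hn : 1 ≤ n) (b : ZMod 2) :
    (bucket (univ : Finset (Fin n)) b).card = 2 ^ (n - 1) := by
  rw [card_bucket (mem_univ ⟨0, hn⟩), card_fin]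

lemma cubeEdges_eq_edgesOf :
    cubeEdges n = edgesOf (bucket univ 0) fun v => univ.image (v ∆ unitVec ·) := by
  ext ⟨v, w⟩
  simp [mem_edgesOf, mem_cubeEdges, mem_bucket_univ, evenVertex_iff_parity_eq_zero, eq_comm]

lemma card_cubeEdges (hn : 1 ≤ n) : (cubeEdges n).card = n * 2 ^ (n - 1) := by
  have hdeg : ∀ v : Fin n → Bool, (univ.image (v ∆ unitVec ·)).card = n := fun v => by
    rw [card_image_of_injective (f := fun j => v ∆ unitVec j) univ
      ((symmDiff_right_injective v).comp unitVec_injective), card_univ, Fintype.card_fin]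
  rw [cubeEdges_eq_edgesOf, card_edgesOf, sum_congr rfl fun v _ => hdeg v, sum_const,
    card_bucket_univ hn, smul_eq_mul, mul_comm]

theorem isLamanCubeExtension_three :
    IsLamanCubeExtension 3 (edgesOf (bucket univ 0) fun _ => bucket univ 1) := by
  have hcube : cubeEdges 3 ⊆ edgesOf (bucket (univ : Finset (Fin 3)) 0) fun _ =>
      bucket (univ : Finset (Fin 3)) 1 := by
    rintro ⟨v, w⟩ h
    obtain ⟨hv, j, rfl⟩ := mem_cubeEdges.1 h
    rw [evenVertex_iff_parity_eq_zero] at hv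
    simp [mem_edgesOf, mem_bucket_univ, parity_symmDiff, hv]
  have hcard : (edgesOf (bucket (univ : Finset (Fin 3)) 0) fun _ =>
      bucket (univ : Finset (Fin 3)) 1).card = 16 := by
    simp [card_edgesOf, card_bucket_univ]
  refine ⟨fun p hp => ?_, hcube, ?_, hcard, fun A' B' _ _ hA' _ => ?_⟩
  · rw [mem_edgesOf, mem_bucket_univ, mem_bucket_univ] at hp
    exact ⟨evenVertex_iff_parity_eq_zero.2 hp.1, not_evenVertex_iff_parity_eq_one.2 hp.2⟩
  · rw [card_sdiff_of_subset hcube, hcard, card_cubeEdges (by norm_num)]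
    norm_num
  · refine card_edges_le_of_expansion _ _ (fun p hp => (mem_edgesOf.1 hp).2)
      (fun _ => by simp [card_bucket_univ]) ?_ B' hA'
    rintro F ⟨v, hv⟩ hF
    simpa [card_bucket_univ] using hF v hv

def lamanNbhd (S : Finset (Fin n → Bool)) (v : Fin n → Bool) : Finset (Fin n → Bool) :=
  (if v ∈ S then gens univ else (gens univ).erase triple₁).image (v ∆ ·)

lemma card_lamanNbhd (hn : 4 ≤ n) (S : Finset (Fin n → Bool)) (v : Fin n → Bool) :
    (lamanNbhd S v).card = n + 1 + if v ∈ S then 1 else 0 := by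
  rw [lamanNbhd, card_image_of_injective _ (symmDiff_right_injective v)]
  split_ifs
  · rw [card_gens hn, card_univ, Fintype.card_fin]
  · rw [card_erase_of_mem (triple₁_mem_gens univ), card_gens hn, card_univ,
      Fintype.card_fin]
    rfl

lemma lamanNbhd_subset (S : Finset (Fin n → Bool)) (v : Fin n → Bool) :
    lamanNbhd S v ⊆ (gens univ).image (v ∆ ·) := by
  unfold lamanNbhd
  split_ifs
  exacts [subset_rfl, image_subset_image (erase_subset _ _)]

lemma symmDiff_unitVec_mem_lamanNbhd (hn : 4 ≤ n) (S : Finset (Fin n → Bool)) (v : Fin n → Bool)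
    (j : Fin n) : v ∆ unitVec j ∈ lamanNbhd S v := by
  refine mem_image_of_mem _ ?_
  have := unitVec_mem_gens (mem_univ j)
  split_ifs
  exacts [this, mem_erase.2 ⟨(triple₁_ne_unitVec hn j).symm, this⟩]

theorem isLamanCubeExtension_of_expansion (hn : 4 ≤ n) {S : Finset (Fin n → Bool)}
    (hS : S ⊆ bucket univ 0) (hcard : S.card = 2 ^ (n - 1) - (n + 1))
    (hexp : ∀ T ⊆ S, T.Nonempty → T.card + (n + 1) ≤ (nbhd univ T).card) :
    IsLamanCubeExtension n (edgesOf (bucket univ 0) (lamanNbhd S)) := by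
  set E := edgesOf (bucket univ 0) (lamanNbhd S)
  have hP := add_two_le_two_pow hn
  have hcube : cubeEdges n ⊆ E := by
    rintro ⟨v, w⟩ h
    obtain ⟨hv, j, rfl⟩ := mem_cubeEdges.1 h
    exact mem_edgesOf.2 ⟨mem_bucket_univ.2 (evenVertex_iff_parity_eq_zero.1 hv),
      symmDiff_unitVec_mem_lamanNbhd hn S v j⟩
  have hcardE : E.card = (n + 1) * 2 ^ (n - 1) + S.card := by
    rw [card_edgesOf, sum_congr rfl fun v _ => card_lamanNbhd hn S v, sum_add_distrib, sum_const,
      sum_boole, card_bucket_univ (by omega), smul_eq_mul, Nat.cast_id, filter_mem_eq_inter,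
      inter_eq_right.2 hS, mul_comm]
  refine ⟨fun p hp => ?_, hcube, ?_, ?_, fun A' B' _ _ hA' _ => ?_⟩
  · obtain ⟨hv, hw⟩ := mem_edgesOf.1 hp
    rw [mem_bucket_univ] at hv
    obtain ⟨u, hu, hpu⟩ := mem_image.1 (lamanNbhd_subset S p.1 hw)
    refine ⟨evenVertex_iff_parity_eq_zero.2 hv, not_evenVertex_iff_parity_eq_one.2 ?_⟩
    rw [← hpu, parity_symmDiff, hv, mem_bucket_univ.1 (gens_subset_bucket hn (subset_univ _) hu),
      zero_add]
  · rw [card_sdiff_of_subset hcube, hcardE, card_cubeEdges (by omega), hcard,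
      ← mul_pow_sub_one (by omega : n ≠ 0) 2, add_one_mul]
    omega
  · rw [hcardE, hcard]
    omega
  · refine card_edges_le_of_expansion E (lamanNbhd S) (fun p hp => (mem_edgesOf.1 hp).2)
      (fun v => by rw [card_lamanNbhd hn]; split_ifs <;> omega) (fun F hF hdeg => ?_) B' hA'
    have hFS : F ⊆ S := fun v hv => by
      by_contra h
      simpa [card_lamanNbhd hn, h] using hdeg v hv
    have hnbhd : F.biUnion (lamanNbhd S) = nbhd univ F := by
      rw [nbhd, ← biUnion_image_left]
      exact biUnion_congr rfl fun v hv => by simp [lamanNbhd, hFS hv]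
    rw [hnbhd]
    exact hexp F hFS hF

/-- Its pairwise differences avoid `0110`, the only nonzero `s` with `s ∆ gens univ = gens univ`,
so any two of its vertices have `7` neighbours. -/
def lamanSet₄ : Finset (Fin 4 → Bool) :=
  {![false, false, false, false], ![true, true, false, false], ![false, false, true, true]}

set_option maxRecDepth 8000 in
lemma card_nbhd_pair_lamanSet₄ :
    ∀ x ∈ lamanSet₄, ∀ y ∈ lamanSet₄, x ≠ y → 7 ≤ (nbhd univ {x, y}).card := by
  decide

lemma expansion_lamanSet₄ :
    ∀ T ⊆ lamanSet₄, T.Nonempty → T.card + (4 + 1) ≤ (nbhd univ T).card := by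
  intro T hT hne
  have h3 : T.card ≤ 3 := (card_le_card hT).trans (by decide)
  interval_cases h : T.card
  · exact absurd h (card_pos.2 hne).ne'
  · simpa [card_gens] using card_gens_le_card_nbhd (J := univ) hne
  · obtain ⟨x, y, hxy, rfl⟩ := card_eq_two.1 h
    exact card_nbhd_pair_lamanSet₄ x (hT (by simp)) y (hT (by simp)) hxy
  · have hS : lamanSet₄ ⊆ bucket univ 0 := by decide
    rw [card_nbhd_eq_of_lt le_rfl (subset_univ _) (hT.trans hS)]
    all_goals simp [h]

theorem exists_isLamanCubeExtension (hn : 3 ≤ n) : ∃ E, IsLamanCubeExtension n E := by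
  rcases (show n = 3 ∨ n = 4 ∨ 5 ≤ n by omega) with rfl | rfl | h5
  · exact ⟨_, isLamanCubeExtension_three⟩
  · exact ⟨_, isLamanCubeExtension_of_expansion le_rfl (by decide) (by decide) expansion_lamanSet₄⟩
  have hle : 2 ^ (n - 1) - (n + 1) ≤ (bucket (univ : Finset (Fin n)) 0).card := by
    rw [card_bucket_univ (by omega)]
    exact Nat.sub_le _ _
  obtain ⟨S, hS, hcard⟩ := exists_subset_card_eq hle
  refine ⟨_, isLamanCubeExtension_of_expansion (by omega) hS hcard fun T hT hne => ?_⟩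
  have hexp := hasExpansion_univ h5 0 T (hT.trans hS) hne
  rw [card_univ, Fintype.card_fin] at hexp
  have := card_le_card hT
  have := card_pos.2 hne
  omega

end Construction

end CubeLaman

/-- For `d ≥ 4`, one can add exactly `2^(d-1) - d` edges (between the two sides
`A` and `B`) to the graph of the `(d-1)`-cube so that the resulting bipartite graph
is `(1,d)`-Laman: `|E| = d·|A| + |B| - d` (where `|A| = |B| = 2^(d-2)`), and every
induced subgraph with `A' ≠ ∅` and `B' ≠ ∅` has at most `d·|A'| + |B'| - d`
edges. -/
theorem cube_plus_edges_one_d_laman (d : ℕ) (hd : 4 ≤ d) :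
    ∃ E : Finset ((Fin (d - 1) → Bool) × (Fin (d - 1) → Bool)),
      (∀ p ∈ E, evenVertex p.1 ∧ ¬ evenVertex p.2) ∧
      cubeEdges (d - 1) ⊆ E ∧
      (E \ cubeEdges (d - 1)).card = 2 ^ (d - 1) - d ∧
      E.card = d * 2 ^ (d - 2) + 2 ^ (d - 2) - d ∧
      ∀ A' B' : Finset (Fin (d - 1) → Bool),
        (∀ v ∈ A', evenVertex v) → (∀ v ∈ B', ¬ evenVertex v) →
        A'.Nonempty → B'.Nonempty →
        (E.filter fun p => p.1 ∈ A' ∧ p.2 ∈ B').card ≤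
          d * A'.card + B'.card - d := by
  obtain ⟨n, rfl⟩ : ∃ n, d = n + 1 := ⟨d - 1, by omega⟩
  exact CubeLaman.exists_isLamanCubeExtension (by omega)
end

section
/- If every d-dimensional balanced simplicial complex Γ embeddable in the 2d-sphere satisfies f_d(Γ) ≤ 2 f_{d-1}(Γ), then every d-dimensional simplicial complex K embeddable in the 2d-sphere satisfies f_d(K) ≤ (2(d+1)^{d+1}/(d+1)!) · f_{d-1}(K). -/
/-- The geometric realization of an abstract simplicial complex `K` on a finite
vertex set `V`: the set of convex-combination weight functions supported on faces
of `K`. -/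
def realization {V : Type*} [Fintype V] (K : Finset (Finset V)) : Set (V → ℝ) :=
  {x | ∃ F ∈ K, (∀ v, 0 ≤ x v) ∧ (∀ v, x v ≠ 0 → v ∈ F) ∧ ∑ v, x v = 1}

/-- A simplicial complex `K` is (topologically) embeddable in the `n`-sphere if
there is a continuous injection from its geometric realization into the unit
sphere of `ℝ^(n+1)`. -/
def EmbeddableInSphere {V : Type*} [Fintype V] (K : Finset (Finset V)) (n : ℕ) : Prop :=
  ∃ f : realization K → EuclideanSpace ℝ (Fin (n + 1)),
    Continuous f ∧ Function.Injective f ∧ ∀ x, ‖f x‖ = 1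

lemma emb_mono {V : Type*} [Fintype V] {Γ K : Finset (Finset V)} (h : Γ ⊆ K) {n : ℕ}
    (he : EmbeddableInSphere K n) : EmbeddableInSphere Γ n := by
  obtain ⟨f, hc, hi, hn⟩ := he
  have hsub : ∀ x : realization Γ, (x : V → ℝ) ∈ realization K := by
    rintro ⟨x, F, hF, h1, h2, h3⟩
    exact ⟨F, h hF, h1, h2, h3⟩
  refine ⟨fun x => f ⟨x, hsub x⟩, ?_, ?_, fun x => hn _⟩
  · exact hc.comp (Continuous.subtype_mk continuous_subtype_val _)
  · intro a b hab
    exact Subtype.ext (Subtype.mk_eq_mk.mp (hi hab))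

def injOnEquiv {V : Type*} [Fintype V] [DecidableEq V] {k : ℕ} (F : Finset V) :
    {c : V → Fin k // Set.InjOn c ↑F} ≃ (({v // v ∈ F} ↪ Fin k) × ({v // v ∉ F} → Fin k)) where
  toFun c := ⟨⟨fun v => c.1 v.1, fun a b h => Subtype.ext (c.2 a.2 b.2 h)⟩, fun v => c.1 v.1⟩
  invFun p := ⟨fun v => if hv : v ∈ F then p.1 ⟨v, hv⟩ else p.2 ⟨v, hv⟩, by
    intro a ha b hb hab
    simp only [Finset.mem_coe] at ha hb
    dsimp only at hab
    rw [dif_pos ha, dif_pos hb] at hab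
    exact congrArg Subtype.val (p.1.injective hab)⟩
  left_inv c := by
    ext v
    dsimp only
    split_ifs <;> rfl
  right_inv p := by
    refine Prod.ext ?_ ?_
    · ext v; simp [dif_pos v.2]
    · ext v; simp [dif_neg v.2]

lemma count_injOn {V : Type*} [Fintype V] [DecidableEq V] {d : ℕ} (F : Finset V)
    (hF : F.card = d + 1) :
    Fintype.card {c : V → Fin (d + 1) // Set.InjOn c ↑F} =
      Nat.factorial (d + 1) * (d + 1) ^ (Fintype.card V - (d + 1)) := by
  rw [Fintype.card_congr (injOnEquiv F), Fintype.card_prod, Fintype.card_embedding_eq,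
    Fintype.card_fun]
  have h1 : Fintype.card {v // v ∈ F} = d + 1 := by rw [Fintype.card_coe, hF]
  have h2 : Fintype.card {v // v ∉ F} = Fintype.card V - (d + 1) := by
    rw [Fintype.card_subtype_compl, h1]
  rw [h1, h2, Fintype.card_fin, Nat.descFactorial_self]

/-- If every `d`-dimensional balanced simplicial complex embeddable in the
`2d`-sphere satisfies `f_d ≤ 2·f_{d-1}`, then every `d`-dimensional simplicial
complex `K` embeddable in the `2d`-sphere satisfies
`f_d(K) ≤ (2(d+1)^(d+1)/(d+1)!) · f_{d-1}(K)` (stated in fraction-free form). -/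
theorem balanced_euler_bound_implies_general (d : ℕ)
    (hbal : ∀ (W : Type) [Fintype W] [DecidableEq W] (Γ : Finset (Finset W)),
      (∀ F ∈ Γ, ∀ G ⊆ F, G ∈ Γ) →
      (∀ F ∈ Γ, F.card ≤ d + 1) →
      (∃ c : W → Fin (d + 1), ∀ F ∈ Γ, Set.InjOn c ↑F) →
      EmbeddableInSphere Γ (2 * d) →
      (Γ.filter fun F => F.card = d + 1).card ≤
        2 * (Γ.filter fun F => F.card = d).card)
    {V : Type} [Fintype V] [DecidableEq V] (K : Finset (Finset V))
    (hcomplex : ∀ F ∈ K, ∀ G ⊆ F, G ∈ K)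
    (hdim : ∀ F ∈ K, F.card ≤ d + 1)
    (hemb : EmbeddableInSphere K (2 * d)) :
    Nat.factorial (d + 1) * (K.filter fun F => F.card = d + 1).card ≤
      2 * (d + 1) ^ (d + 1) * (K.filter fun F => F.card = d).card := by
  classical
  set n := Fintype.card V with hn
  by_cases hempty : (K.filter fun F : Finset V => F.card = d + 1) = ∅
  · rw [hempty]; simp
  -- d + 1 ≤ n
  obtain ⟨F₀, hF₀⟩ := Finset.nonempty_iff_ne_empty.mpr hempty
  have hdn : d + 1 ≤ n := by
    have := (Finset.mem_filter.mp hF₀).2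
    calc d + 1 = F₀.card := this.symm
      _ ≤ n := Finset.card_le_univ F₀
  -- per-coloring bound via hbal
  have per : ∀ c : V → Fin (d + 1),
      (K.filter fun F : Finset V => F.card = d + 1 ∧ Set.InjOn c ↑F).card ≤
        2 * (K.filter fun F : Finset V => F.card = d).card := by
    intro c
    set Γ := K.filter (fun F : Finset V => Set.InjOn c (↑F : Set V)) with hΓ
    have hclos : ∀ F ∈ Γ, ∀ G ⊆ F, G ∈ Γ := by
      intro F hF G hG
      rw [Finset.mem_filter] at hF ⊢
      exact ⟨hcomplex F hF.1 G hG, hF.2.mono (by exact_mod_cast hG)⟩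
    have hd : ∀ F ∈ Γ, F.card ≤ d + 1 := fun F hF => hdim F (Finset.mem_filter.mp hF).1
    have hcol : ∃ c' : V → Fin (d + 1), ∀ F ∈ Γ, Set.InjOn c' ↑F :=
      ⟨c, fun F hF => (Finset.mem_filter.mp hF).2⟩
    have hres := hbal V Γ hclos hd hcol (emb_mono (Finset.filter_subset _ _) hemb)
    calc (K.filter fun F : Finset V => F.card = d + 1 ∧ Set.InjOn c ↑F).card
        = (Γ.filter fun F : Finset V => F.card = d + 1).card := by
          congr 1
          rw [hΓ, Finset.filter_filter]
          ext F
          simp only [Finset.mem_filter]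
          tauto
      _ ≤ 2 * (Γ.filter fun F : Finset V => F.card = d).card := hres
      _ ≤ 2 * (K.filter fun F : Finset V => F.card = d).card := by
          apply Nat.mul_le_mul_left
          apply Finset.card_le_card
          intro F hF
          rw [hΓ, Finset.filter_filter] at hF
          rw [Finset.mem_filter] at hF ⊢
          tauto
  -- double counting
  have dc : ∑ c : V → Fin (d + 1),
        (K.filter fun F : Finset V => F.card = d + 1 ∧ Set.InjOn c ↑F).card
      = ∑ F ∈ (K.filter fun F : Finset V => F.card = d + 1),
          (Finset.univ.filter fun c : V → Fin (d + 1) => Set.InjOn c ↑F).card := by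
    calc ∑ c : V → Fin (d + 1),
          (K.filter fun F : Finset V => F.card = d + 1 ∧ Set.InjOn c ↑F).card
        = ∑ F ∈ K, ∑ c : V → Fin (d + 1),
            if F.card = d + 1 ∧ Set.InjOn c ↑F then 1 else 0 := by
          simp only [Finset.card_filter]
          exact Finset.sum_comm
      _ = _ := by
          rw [Finset.sum_filter]
          refine Finset.sum_congr rfl fun F _ => ?_
          simp only [Finset.card_filter]
          by_cases h : F.card = d + 1
          · simp [h]
          · simp [h]
  -- evaluate the inner count
  have cnt : ∀ F ∈ (K.filter fun F : Finset V => F.card = d + 1),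
      (Finset.univ.filter fun c : V → Fin (d + 1) => Set.InjOn c ↑F).card =
        Nat.factorial (d + 1) * (d + 1) ^ (n - (d + 1)) := by
    intro F hF
    rw [← Fintype.card_subtype]
    exact count_injOn F (Finset.mem_filter.mp hF).2
  have lhs_eq : ∑ F ∈ (K.filter fun F : Finset V => F.card = d + 1),
      (Finset.univ.filter fun c : V → Fin (d + 1) => Set.InjOn c ↑F).card =
      (K.filter fun F : Finset V => F.card = d + 1).card *
        (Nat.factorial (d + 1) * (d + 1) ^ (n - (d + 1))) := by
    rw [Finset.sum_congr rfl cnt, Finset.sum_const, smul_eq_mul]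
  have ub : ∑ c : V → Fin (d + 1),
        (K.filter fun F : Finset V => F.card = d + 1 ∧ Set.InjOn c ↑F).card
      ≤ (d + 1) ^ n * (2 * (K.filter fun F : Finset V => F.card = d).card) := by
    calc _ ≤ ∑ _c : V → Fin (d + 1), 2 * (K.filter fun F : Finset V => F.card = d).card :=
          Finset.sum_le_sum fun c _ => per c
      _ = (d + 1) ^ n * (2 * (K.filter fun F : Finset V => F.card = d).card) := by
          rw [Finset.sum_const, smul_eq_mul, Finset.card_univ, Fintype.card_fun,
            Fintype.card_fin]
  have key : (K.filter fun F : Finset V => F.card = d + 1).card *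
      (Nat.factorial (d + 1) * (d + 1) ^ (n - (d + 1)))
      ≤ (d + 1) ^ n * (2 * (K.filter fun F : Finset V => F.card = d).card) := by
    rw [← lhs_eq, ← dc]; exact ub
  have hpow : (d + 1) ^ n = (d + 1) ^ (d + 1) * (d + 1) ^ (n - (d + 1)) := by
    rw [← pow_add, Nat.add_sub_cancel' hdn]
  rw [hpow] at key
  have hX : 0 < (d + 1) ^ (n - (d + 1)) := pow_pos (Nat.succ_pos d) _
  refine Nat.le_of_mul_le_mul_right ?_ hX
  calc Nat.factorial (d + 1) * (K.filter fun F : Finset V => F.card = d + 1).card *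
        (d + 1) ^ (n - (d + 1))
      = (K.filter fun F : Finset V => F.card = d + 1).card *
          (Nat.factorial (d + 1) * (d + 1) ^ (n - (d + 1))) := by ring
    _ ≤ (d + 1) ^ (d + 1) * (d + 1) ^ (n - (d + 1)) *
          (2 * (K.filter fun F : Finset V => F.card = d).card) := key
    _ = 2 * (d + 1) ^ (d + 1) * (K.filter fun F : Finset V => F.card = d).card *
          (d + 1) ^ (n - (d + 1)) := by ring
end
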